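/- arXiv:2510.06571 — 2 statements merged into one kernel-verified Lean document; each statement's English description precedes it below -/
import Mathlib

section
/- Let s_r > s̲ where s̲ = s₀ + ε v₀ + (β/α)·∫₀^{s₀}(T₀(x) - T_m)dx ≥ s₀, with ε, β, α, k > 0, v₀ ≥ 0, T₀(x) ≥ T_m. Then the initial control value q(0) = -(k c₂/α)·∫₀^{s₀}(T₀(x)-T_m)dx - (k/β)·(c₁(s₀ - s_r) + c₂ ε v₀) is strictly positive whenever 0 < c₁ ≤ c₂ < c₁·(1 + (s_r - s̲)/(s̲ - s₀)) (with the convention that the upper bound is +∞ when s̲ = s₀). -/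
open Real intervalIntegral

/- Writing `d = s̲ - s₀ = ε v₀ + (β/α) ∫₀^{s₀} (T₀ - Tm) ≥ 0`, the initial control is
`q(0) = (k/β) (c₁ (s_r - s₀) - c₂ d)`, and the gain bound `c₂ < c₁ (s_r - s₀) / d` is exactly
`c₂ d < c₁ (s_r - s₀)`; when `d = 0` this reduces to `s_r > s₀`. -/

lemma mul_sub_lt_mul_sub_of_lt_one_add_div {s₀ s s_r c₁ c₂ : ℝ} (hs : s₀ ≤ s) (hsr : s < s_r)
    (hc₁ : 0 < c₁) (hc₂ : s ≠ s₀ → c₂ < c₁ * (1 + (s_r - s) / (s - s₀))) :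
    c₂ * (s - s₀) < c₁ * (s_r - s₀) := by
  rcases hs.eq_or_lt with rfl | hlt
  · rw [sub_self, mul_zero]
    exact mul_pos hc₁ (sub_pos.mpr hsr)
  · have hd : 0 < s - s₀ := sub_pos.mpr hlt
    have hbound : c₁ * (1 + (s_r - s) / (s - s₀)) = c₁ * (s_r - s₀) / (s - s₀) := by
      field_simp
      ring
    rw [← lt_div_iff₀ hd, ← hbound]
    exact hc₂ hlt.ne'

theorem stmt_3_general (ε β α k v₀ s₀ s_r Tm c₁ c₂ : ℝ) (T₀ : ℝ → ℝ)
    (hε : 0 < ε) (hβ : 0 < β) (hα : 0 < α) (hk : 0 < k)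
    (hv₀ : 0 ≤ v₀) (hs₀ : 0 < s₀)
    (hT₀ : ∀ x ∈ Set.Icc 0 s₀, Tm ≤ T₀ x)
    (sunder : ℝ)
    (hsunder : sunder = s₀ + ε * v₀ + (β / α) * ∫ x in (0:ℝ)..s₀, (T₀ x - Tm))
    (hsr : s_r > sunder)
    (hc₁ : 0 < c₁)
    (hc₂ : sunder ≠ s₀ → c₂ < c₁ * (1 + (s_r - sunder) / (sunder - s₀))) :
    0 < -(k * c₂ / α) * (∫ x in (0:ℝ)..s₀, (T₀ x - Tm))
        - (k / β) * (c₁ * (s₀ - s_r) + c₂ * ε * v₀) := by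
  set I := ∫ x in (0:ℝ)..s₀, (T₀ x - Tm)
  have hI : 0 ≤ I := integral_nonneg hs₀.le fun x hx => sub_nonneg.mpr (hT₀ x hx)
  have hs : s₀ ≤ sunder := by
    rw [hsunder, add_assoc, le_add_iff_nonneg_right]
    positivity
  have hgain := mul_sub_lt_mul_sub_of_lt_one_add_div hs hsr hc₁ hc₂
  have hq : -(k * c₂ / α) * I - (k / β) * (c₁ * (s₀ - s_r) + c₂ * ε * v₀)
      = (k / β) * (c₁ * (s_r - s₀) - c₂ * (sunder - s₀)) := by
    rw [hsunder]
    field_simp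
    ring
  rw [hq]
  exact mul_pos (div_pos hk hβ) (sub_pos.mpr hgain)

theorem stmt_3 (ε β α k v₀ s₀ s_r Tm c₁ c₂ : ℝ) (T₀ : ℝ → ℝ)
    (hε : 0 < ε) (hβ : 0 < β) (hα : 0 < α) (hk : 0 < k)
    (hv₀ : 0 ≤ v₀) (hs₀ : 0 < s₀)
    (hT₀ : ∀ x ∈ Set.Icc 0 s₀, Tm ≤ T₀ x)
    (hT₀int : IntervalIntegrable (fun x => T₀ x - Tm) MeasureTheory.volume 0 s₀)
    (sunder : ℝ)
    (hsunder : sunder = s₀ + ε * v₀ + (β / α) * ∫ x in (0:ℝ)..s₀, (T₀ x - Tm))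
    (hsr : s_r > sunder)
    (hc₁ : 0 < c₁) (hc₁₂ : c₁ ≤ c₂)
    (hc₂ : sunder ≠ s₀ → c₂ < c₁ * (1 + (s_r - sunder) / (sunder - s₀))) :
    0 < -(k * c₂ / α) * (∫ x in (0:ℝ)..s₀, (T₀ x - Tm))
        - (k / β) * (c₁ * (s₀ - s_r) + c₂ * ε * v₀) :=
  stmt_3_general ε β α k v₀ s₀ s_r Tm c₁ c₂ T₀ hε hβ hα hk hv₀ hs₀ hT₀ sunder hsunder hsr hc₁ hc₂
end

section
/- Let q : [0,∞) → ℝ be differentiable, s : [0,∞) → ℝ differentiable with s'(t) ≥ 0, and suppose q'(t) = -c₂·q(t) + (k/β)·(c₂ - c₁)·s'(t) with constants k, β > 0 and 0 < c₁ ≤ c₂, and q(0) > 0. Then q(t) ≥ q(0)·e^{-c₂ t} > 0 for all t ≥ 0. -/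
/-!
The integrating factor `e^{c₂ t}` turns the equation into
`(q e^{c₂ t})' = (k/β)(c₂ - c₁) s' e^{c₂ t} ≥ 0`, so `q e^{c₂ t}` is nondecreasing on `[0, ∞)`
and hence bounded below by its value `q 0` at `t = 0`.
-/

open Real Set

lemma hasDerivAt_mul_exp_mul {q : ℝ → ℝ} {q' : ℝ} (c t : ℝ) (hq : HasDerivAt q q' t) :
    HasDerivAt (fun t => q t * exp (c * t)) ((q' + c * q t) * exp (c * t)) t := by
  have hexp : HasDerivAt (fun t => exp (c * t)) (exp (c * t) * c) t :=
    ((hasDerivAt_id t).const_mul c).exp.congr_deriv (by simp)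
  exact (hq.mul hexp).congr_deriv (by ring)

lemma monotoneOn_mul_exp_of_neg_mul_le_deriv {q : ℝ → ℝ} {c : ℝ} (hq : Differentiable ℝ q)
    (h : ∀ t > 0, -c * q t ≤ deriv q t) :
    MonotoneOn (fun t => q t * exp (c * t)) (Ici 0) := by
  have hderiv (t : ℝ) := hasDerivAt_mul_exp_mul c t (hq t).hasDerivAt
  refine monotoneOn_of_deriv_nonneg (convex_Ici 0)
    (fun t _ => (hderiv t).continuousAt.continuousWithinAt)
    (fun t _ => (hderiv t).differentiableAt.differentiableWithinAt) ?_
  intro t ht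
  rw [interior_Ici] at ht
  rw [(hderiv t).deriv]
  exact mul_nonneg (by linarith [h t ht]) (exp_pos _).le

lemma mul_exp_neg_mul_le_of_neg_mul_le_deriv {q : ℝ → ℝ} {c : ℝ} (hq : Differentiable ℝ q)
    (h : ∀ t > 0, -c * q t ≤ deriv q t) {t : ℝ} (ht : 0 ≤ t) :
    q 0 * exp (-c * t) ≤ q t := by
  have hmono := monotoneOn_mul_exp_of_neg_mul_le_deriv hq h self_mem_Ici ht ht
  simp only [mul_zero, exp_zero, mul_one] at hmono
  calc q 0 * exp (-c * t) ≤ q t * exp (c * t) * exp (-c * t) :=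
        mul_le_mul_of_nonneg_right hmono (exp_pos _).le
    _ = q t := by rw [mul_assoc, ← exp_add]; simp

theorem stmt_16_general (k β c₁ c₂ : ℝ) (hk : 0 < k) (hβ : 0 < β)
    (hc₁₂ : c₁ ≤ c₂)
    (q s : ℝ → ℝ) (hq : Differentiable ℝ q)
    (hs' : ∀ t ≥ (0:ℝ), 0 ≤ deriv s t)
    (hode : ∀ t ≥ (0:ℝ), deriv q t = -c₂ * q t + (k/β) * (c₂ - c₁) * deriv s t)
    (hq0 : 0 < q 0) :
    ∀ t ≥ (0:ℝ), q t ≥ q 0 * Real.exp (-c₂ * t) ∧ 0 < q t := by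
  have hforcing (t : ℝ) (ht : 0 < t) : -c₂ * q t ≤ deriv q t := by
    have : 0 ≤ k / β * (c₂ - c₁) * deriv s t :=
      mul_nonneg (mul_nonneg (div_pos hk hβ).le (sub_nonneg.2 hc₁₂)) (hs' t ht.le)
    linarith [hode t ht.le]
  intro t ht
  have hlower := mul_exp_neg_mul_le_of_neg_mul_le_deriv hq hforcing ht
  exact ⟨hlower, lt_of_lt_of_le (by positivity) hlower⟩

theorem stmt_16 (k β c₁ c₂ : ℝ) (hk : 0 < k) (hβ : 0 < β)
    (hc₁ : 0 < c₁) (hc₁₂ : c₁ ≤ c₂)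
    (q s : ℝ → ℝ) (hq : Differentiable ℝ q) (hs : Differentiable ℝ s)
    (hs' : ∀ t ≥ (0:ℝ), 0 ≤ deriv s t)
    (hode : ∀ t ≥ (0:ℝ), deriv q t = -c₂ * q t + (k/β) * (c₂ - c₁) * deriv s t)
    (hq0 : 0 < q 0) :
    ∀ t ≥ (0:ℝ), q t ≥ q 0 * Real.exp (-c₂ * t) ∧ 0 < q t :=
  stmt_16_general k β c₁ c₂ hk hβ hc₁₂ q s hq hs' hode hq0
end
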